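/- Let τ be exponentially distributed with parameter 1 and W = 1, so Z_t = M_t is a standard Poisson process. Then the rate function J(m) = inf_{β>0} sup_{x,y} {x + my − β log E[e^{xτ + yW}]} equals 1 − m + m log m for m > 0 and +∞ for m ≤ 0; in particular J is not lower semicontinuous at m = 0 since θ_0 = 1 < +∞ = J(0). -/
import Mathlib


open MeasureTheory Filter Real Set Topology

noncomputable def elog (x : ENNReal) : EReal :=
  if x = 0 then ⊥ else if x = ⊤ then ⊤ else ((Real.log x.toReal : ℝ) : EReal)

lemma elog_ofReal_pos {r : ℝ} (hr : 0 < r) :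
    elog (ENNReal.ofReal r) = ((Real.log r : ℝ) : EReal) := by
  rw [elog, if_neg, if_neg]
  · rw [ENNReal.toReal_ofReal hr.le]
  · exact ENNReal.ofReal_ne_top
  · simp [ENNReal.ofReal_eq_zero, not_le, hr]

lemma elog_top : elog ⊤ = ⊤ := by simp [elog]

/-- The key real inequality: for `0 < m`, `x < 1`,
`x + m * log (1 - x) ≤ 1 - m + m * log m`. -/
lemma key_ineq {m x : ℝ} (hm : 0 < m) (hx : x < 1) :
    x + m * Real.log (1 - x) ≤ 1 - m + m * Real.log m := by
  have h1 : (0:ℝ) < 1 - x := by linarith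
  have h2 : Real.log ((1 - x) / m) ≤ (1 - x) / m - 1 :=
    Real.log_le_sub_one_of_pos (div_pos h1 hm)
  rw [Real.log_div h1.ne' hm.ne'] at h2
  have h3 : m * (Real.log (1 - x) - Real.log m) ≤ m * ((1 - x) / m - 1) :=
    mul_le_mul_of_nonneg_left h2 hm.le
  have h4 : m * ((1 - x) / m - 1) = (1 - x) - m := by field_simp
  rw [h4] at h3
  nlinarith [h3]

/-- Poisson example: if `τ ~ Exp(1)` (so `E[e^{xτ}] = 1/(1−x)` for `x < 1`, `+∞` for
`x ≥ 1`) and `W ≡ 1`, then the rate function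
`J(m) = inf_{β>0} sup_{x,y} {x + my − β log E[e^{xτ+y}]}` equals `1 − m + m log m`
for `m > 0` and `+∞` for `m ≤ 0`; in particular `J` is not lower semicontinuous at
`m = 0` (where `J(0) = +∞` while `θ₀ = 1 < ∞`). -/
theorem poisson_rate_function_not_lsc
    {Ω : Type*} [MeasurableSpace Ω] (μ : Measure Ω) [IsProbabilityMeasure μ]
    (τ : Ω → ℝ) (hτ : Measurable τ)
    (hmgf_lt : ∀ x : ℝ, x < 1 →
      ∫⁻ ω, ENNReal.ofReal (Real.exp (x * τ ω)) ∂μ = ENNReal.ofReal (1 / (1 - x)))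
    (hmgf_ge : ∀ x : ℝ, 1 ≤ x →
      ∫⁻ ω, ENNReal.ofReal (Real.exp (x * τ ω)) ∂μ = ⊤)
    (J : ℝ → EReal)
    (hJ : ∀ m, J m = ⨅ β ∈ Set.Ioi (0:ℝ),
      ⨆ p : ℝ × ℝ, (((p.1 + m * p.2 : ℝ) : EReal)
        - (β : EReal) * elog (∫⁻ ω, ENNReal.ofReal (Real.exp (p.1 * τ ω + p.2)) ∂μ))) :
    (∀ m : ℝ, 0 < m → J m = ((1 - m + m * Real.log m : ℝ) : EReal)) ∧
    (∀ m : ℝ, m ≤ 0 → J m = ⊤) ∧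
    ¬ LowerSemicontinuousAt J 0 := by
  -- Step 1: compute the integral
  have hint : ∀ x y : ℝ, ∫⁻ ω, ENNReal.ofReal (Real.exp (x * τ ω + y)) ∂μ
      = (∫⁻ ω, ENNReal.ofReal (Real.exp (x * τ ω)) ∂μ) * ENNReal.ofReal (Real.exp y) := by
    intro x y
    have : ∀ ω, ENNReal.ofReal (Real.exp (x * τ ω + y))
        = ENNReal.ofReal (Real.exp (x * τ ω)) * ENNReal.ofReal (Real.exp y) := by
      intro ω
      rw [Real.exp_add, ENNReal.ofReal_mul (Real.exp_pos _).le]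
    simp_rw [this]
    exact lintegral_mul_const _ ((ENNReal.measurable_ofReal).comp
      (Real.measurable_exp.comp (hτ.const_mul x)))
  -- Step 2: compute elog of the integral
  have helog_lt : ∀ x y : ℝ, x < 1 →
      elog (∫⁻ ω, ENNReal.ofReal (Real.exp (x * τ ω + y)) ∂μ)
        = ((y - Real.log (1 - x) : ℝ) : EReal) := by
    intro x y hx
    have h1 : (0:ℝ) < 1 - x := by linarith
    rw [hint x y, hmgf_lt x hx, ← ENNReal.ofReal_mul (by positivity)]
    rw [elog_ofReal_pos (by positivity)]
    congr 1
    rw [Real.log_mul (by positivity) (Real.exp_ne_zero y), Real.log_exp,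
      one_div, Real.log_inv]
    ring
  have helog_ge : ∀ x y : ℝ, 1 ≤ x →
      elog (∫⁻ ω, ENNReal.ofReal (Real.exp (x * τ ω + y)) ∂μ) = ⊤ := by
    intro x y hx
    rw [hint x y, hmgf_ge x hx, ENNReal.top_mul (by simp [Real.exp_pos]), elog_top]
  -- Step 3: the term in the supremum
  set T : ℝ → ℝ → ℝ × ℝ → EReal := fun m β p =>
    (((p.1 + m * p.2 : ℝ) : EReal)
      - (β : EReal) * elog (∫⁻ ω, ENNReal.ofReal (Real.exp (p.1 * τ ω + p.2)) ∂μ)) with hT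
  have hTval : ∀ (m β : ℝ), 0 < β → ∀ p : ℝ × ℝ,
      T m β p = if p.1 < 1
        then ((p.1 + m * p.2 - β * (p.2 - Real.log (1 - p.1)) : ℝ) : EReal) else ⊥ := by
    intro m β hβ p
    by_cases hx : p.1 < 1
    · rw [if_pos hx, hT]
      simp only
      rw [helog_lt p.1 p.2 hx, ← EReal.coe_mul, ← EReal.coe_sub]
    · rw [if_neg hx, hT]
      simp only
      rw [helog_ge p.1 p.2 (not_lt.1 hx), EReal.mul_top_of_pos (by exact_mod_cast hβ),
        EReal.sub_top]
  -- Step 4: the supremum when β ≠ m is ⊤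
  have hsup_ne : ∀ (m β : ℝ), 0 < β → β ≠ m → (⨆ p : ℝ × ℝ, T m β p) = ⊤ := by
    intro m β hβ hne
    rw [iSup_eq_top]
    intro b hb
    obtain ⟨r, hr, -⟩ := EReal.exists_between_coe_real hb
    refine ⟨(0, (r + 1) / (m - β)), ?_⟩
    rw [hTval m β hβ _, if_pos (by norm_num)]
    have hmb : m - β ≠ 0 := sub_ne_zero.2 (fun h => hne h.symm)
    have : (0 + m * ((r + 1) / (m - β)) - β * ((r + 1) / (m - β) - Real.log (1 - 0)) : ℝ)
        = r + 1 := by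
      rw [sub_zero, Real.log_one]
      field_simp
      ring
    rw [this]
    exact lt_trans hr (by exact_mod_cast (by linarith : r < r + 1))
  -- Step 5: the supremum when β = m > 0
  have hsup_eq : ∀ m : ℝ, 0 < m →
      (⨆ p : ℝ × ℝ, T m m p) = ((1 - m + m * Real.log m : ℝ) : EReal) := by
    intro m hm
    apply le_antisymm
    · refine iSup_le fun p => ?_
      rw [hTval m m hm p]
      by_cases hx : p.1 < 1
      · rw [if_pos hx]
        have : (p.1 + m * p.2 - m * (p.2 - Real.log (1 - p.1)) : ℝ)
            = p.1 + m * Real.log (1 - p.1) := by ring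
        rw [this]
        exact_mod_cast key_ineq hm hx
      · rw [if_neg hx]; exact bot_le
    · have := le_iSup (T m m) (1 - m, 0)
      refine le_trans ?_ this
      rw [hTval m m hm _, if_pos (show ((1:ℝ)-m,(0:ℝ)).1 < 1 by simp; linarith)]
      apply le_of_eq
      have h1 : (1 : ℝ) - (1 - m) = m := by ring
      norm_cast
      rw [h1]
      ring
  -- Part 1 : m > 0
  have part1 : ∀ m : ℝ, 0 < m → J m = ((1 - m + m * Real.log m : ℝ) : EReal) := by
    intro m hm
    rw [hJ m]
    apply le_antisymm
    · refine le_trans (iInf₂_le m hm) ?_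
      rw [show (⨆ p : ℝ × ℝ, (((p.1 + m * p.2 : ℝ) : EReal)
          - (m : EReal) * elog (∫⁻ ω, ENNReal.ofReal (Real.exp (p.1 * τ ω + p.2)) ∂μ)))
          = ⨆ p : ℝ × ℝ, T m m p from rfl, hsup_eq m hm]
    · refine le_iInf₂ fun β hβ => ?_
      rcases eq_or_ne β m with rfl | hne
      · rw [show (⨆ p : ℝ × ℝ, (((p.1 + β * p.2 : ℝ) : EReal)
            - (β : EReal) * elog (∫⁻ ω, ENNReal.ofReal (Real.exp (p.1 * τ ω + p.2)) ∂μ)))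
            = ⨆ p : ℝ × ℝ, T β β p from rfl, hsup_eq β hβ]
      · rw [show (⨆ p : ℝ × ℝ, (((p.1 + m * p.2 : ℝ) : EReal)
            - (β : EReal) * elog (∫⁻ ω, ENNReal.ofReal (Real.exp (p.1 * τ ω + p.2)) ∂μ)))
            = ⨆ p : ℝ × ℝ, T m β p from rfl, hsup_ne m β hβ hne]
        exact le_top
  -- Part 2 : m ≤ 0
  have part2 : ∀ m : ℝ, m ≤ 0 → J m = ⊤ := by
    intro m hm
    rw [hJ m]
    rw [iInf_eq_top]
    intro β
    rw [iInf_eq_top]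
    intro hβ
    have hβ' : (0:ℝ) < β := hβ
    rw [show (⨆ p : ℝ × ℝ, (((p.1 + m * p.2 : ℝ) : EReal)
        - (β : EReal) * elog (∫⁻ ω, ENNReal.ofReal (Real.exp (p.1 * τ ω + p.2)) ∂μ)))
        = ⨆ p : ℝ × ℝ, T m β p from rfl, hsup_ne m β hβ' (by linarith)]
  refine ⟨part1, part2, ?_⟩
  -- Part 3 : not lower semicontinuous at 0
  intro hlsc
  have hJ0 : J 0 = ⊤ := part2 0 le_rfl
  have h2 : ((2:ℝ) : EReal) < J 0 := by rw [hJ0]; exact EReal.coe_lt_top 2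
  have hev : ∀ᶠ x in 𝓝 (0:ℝ), ((2:ℝ) : EReal) < J x := hlsc _ h2
  have hev' : ∀ᶠ x in 𝓝[>] (0:ℝ), ((2:ℝ) : EReal) < J x :=
    hev.filter_mono nhdsWithin_le_nhds
  have hev1 : ∀ᶠ x in 𝓝[>] (0:ℝ), x < 1 :=
    eventually_nhdsWithin_of_eventually_nhds (Filter.Tendsto.eventually_lt_const
      (by norm_num) Filter.tendsto_id)
  have hevmem : ∀ᶠ x in 𝓝[>] (0:ℝ), (0:ℝ) < x := eventually_mem_nhdsWithin
  obtain ⟨x, hx2, hx1, hx0⟩ := (hev'.and (hev1.and hevmem)).exists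
  have hJx : J x = ((1 - x + x * Real.log x : ℝ) : EReal) := part1 x hx0
  rw [hJx] at hx2
  have : (2:ℝ) < 1 - x + x * Real.log x := by exact_mod_cast hx2
  have hlog : Real.log x ≤ 0 := Real.log_nonpos hx0.le hx1.le
  nlinarith [mul_nonpos_of_nonneg_of_nonpos hx0.le hlog]
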